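/- The induced subgraph of Q_n obtained by deleting all vertices of Hamming weight divisible by 4 has at least (3/4 - o(1))·2^n vertices; consequently π_v(Q_3) ≥ 3/4. -/

import Mathlib

/-! A copy of `Q_3` in `Q_n` is a subcube: the two common neighbours of a vertex at distance two
are the ends of a square, so the images of the eight vertices are `x` flipped along the subsets of
three coordinates `i, j, k`. Flipping a coordinate changes the weight by `±1`, so these eight
weights fill four consecutive integers and one of them is divisible by `4`.

The roots-of-unity filter with `ζ = i` gives
`4 · #{x | 4 ∣ wt x} = 2^n + (1 + i)^n + 0^n + (1 - i)^n`, which is `2^n + O(√2^n)`; hence the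
deleted layers have density `1/4 + o(1)`. -/

open Filter

/-- The hypercube graph `Q_n` on `{0,1}^n`. -/
def Qcube (n : ℕ) : SimpleGraph (Fin n → Bool) where
  Adj x y := hammingDist x y = 1
  symm := ⟨fun x y (h : hammingDist x y = 1) => show hammingDist y x = 1 by rwa [hammingDist_comm]⟩
  loopless := ⟨fun x (h : hammingDist x x = 1) => by simp [hammingDist_self] at h⟩

/-- The Hamming weight (layer) of a vertex of the hypercube. -/
def wt {n : ℕ} (x : Fin n → Bool) : ℕ := (Finset.univ.filter fun i => x i = true).card

/-- The set `S` contains no copy of `Q_3` (as a subgraph of `Q_n`). -/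
def Q3Free (n : ℕ) (S : Set (Fin n → Bool)) : Prop :=
  ¬ ∃ f : (Fin 3 → Bool) → (Fin n → Bool), Function.Injective f ∧
    Set.range f ⊆ S ∧ ∀ a b, (Qcube 3).Adj a b → (Qcube n).Adj (f a) (f b)

open Finset

namespace Qcube

variable {n : ℕ}

def flipAt (x : Fin n → Bool) (i : Fin n) : Fin n → Bool := Function.update x i (!x i)

@[simp]
lemma flipAt_apply_self (x : Fin n → Bool) (i : Fin n) : flipAt x i i = !x i := by
  simp [flipAt]

lemma flipAt_apply_of_ne (x : Fin n → Bool) {i j : Fin n} (h : j ≠ i) : flipAt x i j = x j :=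
  Function.update_of_ne h _ _

@[simp]
lemma flipAt_flipAt (x : Fin n → Bool) (i : Fin n) : flipAt (flipAt x i) i = x := by
  simp [flipAt]

lemma adj_iff_exists_eq_flipAt {x y : Fin n → Bool} :
    (Qcube n).Adj x y ↔ ∃ i, y = flipAt x i := by
  change (univ.filter fun i => x i ≠ y i).card = 1 ↔ _
  rw [card_eq_one]
  constructor
  · rintro ⟨i, hi⟩
    have hdiff : ∀ j, x j ≠ y j ↔ j = i := fun j => by simpa using congrArg (j ∈ ·) hi
    refine ⟨i, funext fun j => ?_⟩
    by_cases hj : j = i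
    · subst hj
      rw [flipAt_apply_self]
      exact Bool.eq_not_iff.2 ((hdiff j).2 rfl).symm
    · rw [flipAt_apply_of_ne _ hj]
      exact (not_not.1 (mt (hdiff j).1 hj)).symm
  · rintro ⟨i, rfl⟩
    refine ⟨i, ext fun j => ?_⟩
    by_cases hj : j = i
    · subst hj; simp
    · simp [flipAt_apply_of_ne _ hj, hj]

lemma eq_flipAt_flipAt_of_adj {x w : Fin n → Bool} {i j : Fin n} (hij : i ≠ j)
    (hi : (Qcube n).Adj (flipAt x i) w) (hj : (Qcube n).Adj (flipAt x j) w) (hwx : w ≠ x) :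
    w = flipAt (flipAt x i) j := by
  obtain ⟨a, rfl⟩ := adj_iff_exists_eq_flipAt.1 hi
  obtain ⟨b, hb⟩ := adj_iff_exists_eq_flipAt.1 hj
  have hbj : b ≠ j := by rintro rfl; simp [hb] at hwx
  by_contra hne
  have haj : j ≠ a := fun h => hne (h ▸ rfl)
  have := congrFun hb j
  rw [flipAt_apply_of_ne _ haj, flipAt_apply_of_ne _ hij.symm, flipAt_apply_of_ne _ hbj.symm,
    flipAt_apply_self] at this
  cases h : x j <;> simp [h] at this

lemma wt_flipAt (x : Fin n → Bool) (i : Fin n) :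
    (wt (flipAt x i) : ℤ) = wt x + if x i then -1 else 1 := by
  have key (y : Fin n → Bool) :
      (wt y : ℤ) = (if y i then 1 else 0) + ∑ j ∈ {i}ᶜ, if y j then 1 else 0 := by
    rw [wt, card_filter, Fintype.sum_eq_add_sum_compl i]
    push_cast
    rfl
  rw [key, key x, sum_congr rfl fun j hj => by rw [flipAt_apply_of_ne _ (by simpa using hj)]]
  cases h : x i <;> simp [h, add_comm]

lemma exists_four_dvd_wt_subcube (x : Fin n → Bool) {i j k : Fin n} (hij : i ≠ j) (hik : i ≠ k)
    (hjk : j ≠ k) :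
    ∃ y ∈ ({x, flipAt x i, flipAt x j, flipAt x k, flipAt (flipAt x i) j, flipAt (flipAt x i) k,
      flipAt (flipAt x j) k, flipAt (flipAt (flipAt x i) j) k} : Set (Fin n → Bool)), 4 ∣ wt y := by
  by_contra! h
  simp only [Set.mem_insert_iff, Set.mem_singleton_iff, forall_eq_or_imp, forall_eq] at h
  have w1 := wt_flipAt x i
  have w2 := wt_flipAt x j
  have w3 := wt_flipAt x k
  have w12 := wt_flipAt (flipAt x i) j
  have w13 := wt_flipAt (flipAt x i) k
  have w23 := wt_flipAt (flipAt x j) k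
  have w123 := wt_flipAt (flipAt (flipAt x i) j) k
  simp only [flipAt_apply_of_ne _ hij.symm, flipAt_apply_of_ne _ hik.symm,
    flipAt_apply_of_ne _ hjk.symm] at w12 w13 w23 w123
  cases hxi : x i <;> cases hxj : x j <;> cases hxk : x k <;>
    simp only [hxi, hxj, hxk, Bool.false_eq_true, if_true, if_false]
      at w1 w2 w3 w12 w13 w23 w123 <;>
    omega

lemma exists_four_dvd_wt_of_embedding {f : (Fin 3 → Bool) → (Fin n → Bool)}
    (hf : Function.Injective f) (hadj : ∀ a b, (Qcube 3).Adj a b → (Qcube n).Adj (f a) (f b)) :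
    ∃ a, 4 ∣ wt (f a) := by
  replace hadj : ∀ a b, hammingDist a b = 1 → (Qcube n).Adj (f a) (f b) := hadj
  obtain ⟨x, hx⟩ : ∃ x, f ![false, false, false] = x := ⟨_, rfl⟩
  obtain ⟨i, h100⟩ := adj_iff_exists_eq_flipAt.1 (hx ▸ hadj _ ![true, false, false] (by decide))
  obtain ⟨j, h010⟩ := adj_iff_exists_eq_flipAt.1 (hx ▸ hadj _ ![false, true, false] (by decide))
  obtain ⟨k, h001⟩ := adj_iff_exists_eq_flipAt.1 (hx ▸ hadj _ ![false, false, true] (by decide))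
  have hij : i ≠ j := by rintro rfl; exact absurd (hf (h100.trans h010.symm)) (by decide)
  have hik : i ≠ k := by rintro rfl; exact absurd (hf (h100.trans h001.symm)) (by decide)
  have hjk : j ≠ k := by rintro rfl; exact absurd (hf (h010.trans h001.symm)) (by decide)
  have h110 : f ![true, true, false] = flipAt (flipAt x i) j :=
    eq_flipAt_flipAt_of_adj hij (h100 ▸ hadj _ _ (by decide)) (h010 ▸ hadj _ _ (by decide))
      (hx ▸ hf.ne (by decide))
  have h101 : f ![true, false, true] = flipAt (flipAt x i) k :=
    eq_flipAt_flipAt_of_adj hik (h100 ▸ hadj _ _ (by decide)) (h001 ▸ hadj _ _ (by decide))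
      (hx ▸ hf.ne (by decide))
  have h011 : f ![false, true, true] = flipAt (flipAt x j) k :=
    eq_flipAt_flipAt_of_adj hjk (h010 ▸ hadj _ _ (by decide)) (h001 ▸ hadj _ _ (by decide))
      (hx ▸ hf.ne (by decide))
  have h111 : f ![true, true, true] = flipAt (flipAt (flipAt x i) j) k :=
    eq_flipAt_flipAt_of_adj hjk (h110 ▸ hadj _ _ (by decide)) (h101 ▸ hadj _ _ (by decide))
      (h100 ▸ hf.ne (by decide))
  obtain ⟨y, hy, hdvd⟩ := exists_four_dvd_wt_subcube x hij hik hjk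
  obtain ⟨a, rfl⟩ : y ∈ Set.range f := by
    simp only [Set.mem_insert_iff, Set.mem_singleton_iff] at hy
    rcases hy with rfl | rfl | rfl | rfl | rfl | rfl | rfl | rfl
    exacts [⟨_, hx⟩, ⟨_, h100⟩, ⟨_, h010⟩, ⟨_, h001⟩, ⟨_, h110⟩, ⟨_, h101⟩, ⟨_, h011⟩, ⟨_, h111⟩]
  exact ⟨a, hdvd⟩

lemma q3Free_not_four_dvd_wt (n : ℕ) : Q3Free n {x | ¬ 4 ∣ wt x} := by
  rintro ⟨f, hf, hrange, hadj⟩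
  obtain ⟨a, ha⟩ := exists_four_dvd_wt_of_embedding hf hadj
  exact hrange ⟨a, rfl⟩ ha

end Qcube

lemma sum_pow_wt {R : Type*} [CommSemiring R] (n : ℕ) (c : R) :
    ∑ x : Fin n → Bool, c ^ wt x = (1 + c) ^ n := by
  have h := Fintype.sum_pow (fun b : Bool => if b then c else 1) n
  simp only [Fintype.sum_bool, if_true, Bool.false_eq_true, if_false] at h
  rw [add_comm, h]
  refine sum_congr rfl fun x _ => ?_
  rw [prod_ite, prod_const, prod_const_one, mul_one, wt]

lemma IsPrimitiveRoot.geom_sum_pow_eq_ite {R : Type*} [CommRing R] [IsDomain R] {ζ : R} {k : ℕ}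
    (hζ : IsPrimitiveRoot ζ k) (r : ℕ) :
    ∑ i ∈ range k, (ζ ^ r) ^ i = if k ∣ r then (k : R) else 0 := by
  split_ifs with hr
  · simp [(hζ.pow_eq_one_iff_dvd r).2 hr]
  · have hne : ζ ^ r - 1 ≠ 0 := sub_ne_zero.2 (mt (hζ.pow_eq_one_iff_dvd r).1 hr)
    refine (mul_eq_zero.1 ?_).resolve_right hne
    rw [geom_sum_mul, ← pow_mul, mul_comm, pow_mul, hζ.pow_eq_one, one_pow, sub_self]

lemma IsPrimitiveRoot.card_dvd_wt_mul {R : Type*} [CommRing R] [IsDomain R] {ζ : R} {m : ℕ}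
    (hζ : IsPrimitiveRoot ζ m) (n : ℕ) :
    (#{x : Fin n → Bool | m ∣ wt x} * m : R) = ∑ k ∈ range m, (1 + ζ ^ k) ^ n := by
  simp_rw [← sum_pow_wt, ← pow_mul, mul_comm _ (wt _), pow_mul]
  rw [sum_comm]
  simp_rw [hζ.geom_sum_pow_eq_ite, sum_ite, sum_const_zero, add_zero, sum_const, nsmul_eq_mul]

lemma abs_card_four_dvd_wt_mul_sub_le (n : ℕ) :
    |(#{x : Fin n → Bool | 4 ∣ wt x} * 4 : ℝ) - 2 ^ n| ≤ 3 * √2 ^ n := by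
  have hnorm : ∀ k < 3, ‖1 + Complex.I ^ (k + 1)‖ ≤ √2 := by
    intro k hk
    interval_cases k <;> norm_num [pow_succ, Complex.norm_eq_sqrt_sq_add_sq]
  have h := Complex.isPrimitiveRoot_I.card_dvd_wt_mul n
  rw [sum_range_succ', pow_zero, one_add_one_eq_two, ← sub_eq_iff_eq_add] at h
  rw [← Real.norm_eq_abs, ← Complex.norm_real]
  push_cast at h ⊢
  rw [h]
  calc ‖∑ k ∈ range 3, (1 + Complex.I ^ (k + 1)) ^ n‖
      ≤ ∑ k ∈ range 3, ‖1 + Complex.I ^ (k + 1)‖ ^ n := by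
        simpa only [norm_pow] using norm_sum_le (range 3) fun k => (1 + Complex.I ^ (k + 1)) ^ n
    _ ≤ ∑ _k ∈ range 3, √2 ^ n := sum_le_sum fun k hk => by
        gcongr; exact hnorm k (mem_range.1 hk)
    _ = 3 * √2 ^ n := by simp

lemma tendsto_card_four_dvd_wt_div_two_pow :
    Tendsto (fun n => (#{x : Fin n → Bool | 4 ∣ wt x} : ℝ) / 2 ^ n) atTop (nhds (1 / 4)) := by
  have hratio : √2 / 2 < 1 := by
    rw [div_lt_one two_pos, Real.sqrt_lt' two_pos]; norm_num
  have hbound : Tendsto (fun n : ℕ => 3 / 4 * (√2 / 2) ^ n) atTop (nhds 0) := by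
    simpa using (tendsto_pow_atTop_nhds_zero_of_lt_one (by positivity) hratio).const_mul (3 / 4)
  refine tendsto_iff_norm_sub_tendsto_zero.2
    (squeeze_zero (fun _ => norm_nonneg _) (fun n => ?_) hbound)
  calc ‖(#{x : Fin n → Bool | 4 ∣ wt x} : ℝ) / 2 ^ n - 1 / 4‖
      = |(#{x : Fin n → Bool | 4 ∣ wt x} * 4 : ℝ) - 2 ^ n| / (4 * 2 ^ n) := by
        rw [Real.norm_eq_abs, ← abs_of_pos (by positivity : (0 : ℝ) < 4 * 2 ^ n), ← abs_div]
        congr 1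
        field_simp
    _ ≤ 3 * √2 ^ n / (4 * 2 ^ n) := by gcongr; exact abs_card_four_dvd_wt_mul_sub_le n
    _ = 3 / 4 * (√2 / 2) ^ n := by rw [div_pow]; ring

lemma ncard_not_four_dvd_wt (n : ℕ) :
    ({x : Fin n → Bool | ¬ 4 ∣ wt x}.ncard : ℝ) = 2 ^ n - #{x : Fin n → Bool | 4 ∣ wt x} := by
  have h := Set.ncard_compl_add_ncard {x : Fin n → Bool | 4 ∣ wt x}
  rw [Set.compl_ofPred, Set.ncard_eq_toFinset_card' {x | 4 ∣ wt x}, Set.toFinset_ofPred] at h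
  rw [eq_sub_iff_add_eq]
  exact_mod_cast h.trans (by simp)

lemma ncard_div_two_pow_le_one {n : ℕ} (S : Set (Fin n → Bool)) : (S.ncard : ℝ) / 2 ^ n ≤ 1 := by
  rw [div_le_one (by positivity)]
  exact_mod_cast (Set.ncard_le_card S).trans (by simp)

/-- Deleting all vertices of `Q_n` whose Hamming weight is divisible by 4 leaves
at least `(3/4 - o(1))·2^n` vertices; consequently `π_v(Q_3) ≥ 3/4`, i.e. the
maximum density `b n` of a `Q_3`-free induced subgraph of `Q_n` is eventually at
least `3/4 - ε` for every `ε > 0`. -/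
theorem stmt8 (b : ℕ → ℝ)
    (hb : ∀ n, b n = sSup {x : ℝ | ∃ S : Set (Fin n → Bool), Q3Free n S ∧
      x = (S.ncard : ℝ) / (2 ^ n : ℝ)}) :
    (∃ e : ℕ → ℝ, Tendsto e atTop (nhds 0) ∧
      ∀ n, (3 / 4 - e n) * 2 ^ n ≤ (({x : Fin n → Bool | ¬ (4 ∣ wt x)}).ncard : ℝ)) ∧
    ∀ ε : ℝ, 0 < ε → ∃ N : ℕ, ∀ n ≥ N, 3 / 4 - ε ≤ b n := by
  set e : ℕ → ℝ := fun n => #{x : Fin n → Bool | 4 ∣ wt x} / 2 ^ n - 1 / 4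
  have he : Tendsto e atTop (nhds 0) := by
    simpa only [sub_self] using tendsto_card_four_dvd_wt_div_two_pow.sub_const (1 / 4)
  have hdensity : ∀ n, 3 / 4 - e n = ({x : Fin n → Bool | ¬ 4 ∣ wt x}.ncard : ℝ) / 2 ^ n := by
    intro n
    simp only [e, ncard_not_four_dvd_wt]
    field_simp
    ring
  refine ⟨⟨e, he, fun n => ((eq_div_iff (by positivity)).1 (hdensity n)).le⟩, fun ε hε => ?_⟩
  obtain ⟨N, hN⟩ := eventually_atTop.1 (he.eventually (gt_mem_nhds hε))
  refine ⟨N, fun n hn => ?_⟩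
  have hbdd : BddAbove {x : ℝ | ∃ S : Set (Fin n → Bool), Q3Free n S ∧ x = S.ncard / 2 ^ n} :=
    ⟨1, by rintro _ ⟨S, -, rfl⟩; exact ncard_div_two_pow_le_one S⟩
  calc 3 / 4 - ε ≤ 3 / 4 - e n := by linarith [hN n hn]
    _ ≤ b n := hb n ▸ le_csSup hbdd ⟨_, Qcube.q3Free_not_four_dvd_wt n, hdensity n⟩
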